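/- There is no SFM M over nodes {X, Y, Z} with real-valued domains whose set of satisfying assignments equals R1 = {w : w(X)² = w(Y) = w(Z)²}. -/

import Mathlib

/-- **No SFM for `X² = Y = Z²`.** There is no SFM (finite acyclic directed graph with
structural functions) over the three real-valued nodes `X, Y, Z` (here `0, 1, 2 : Fin 3`)
whose set of satisfying complete assignments equals
`R1 = {w | w X ^ 2 = w Y ∧ w Y = w Z ^ 2}`. -/
theorem no_sfm_for_square_constraint :
    ¬ ∃ (E : Fin 3 → Fin 3 → Prop)
        (F : ∀ u : Fin 3, (∀ p : Fin 3, E p u → ℝ) → ℝ),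
        (∀ v : Fin 3, ¬ Relation.TransGen E v v) ∧
        (∀ w : Fin 3 → ℝ,
          (∀ u, (∃ p, E p u) → w u = F u (fun p _ => w p)) ↔
          (w 0 ^ 2 = w 1 ∧ w 1 = w 2 ^ 2)) := by
  rintro ⟨E, F, hacyc, hiff⟩
  have hself : ∀ v, ¬ E v v := fun v h => hacyc v (Relation.TransGen.single h)
  have h111 := (hiff ![1,1,1]).mpr (by norm_num [Matrix.cons_val_two, Matrix.tail_cons, Matrix.head_cons])
  have hm11 := (hiff ![-1,1,1]).mpr (by norm_num [Matrix.cons_val_two, Matrix.tail_cons, Matrix.head_cons])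
  have h11m := (hiff ![1,1,-1]).mpr (by norm_num [Matrix.cons_val_two, Matrix.tail_cons, Matrix.head_cons])
  -- node 0 has no parents
  have h0 : ¬ ∃ p, E p 0 := by
    rintro hp
    have e1 := h111 0 hp
    have e2 := hm11 0 hp
    have heq : F 0 (fun p _ => ![(1:ℝ),1,1] p) = F 0 (fun p _ => ![(-1:ℝ),1,1] p) := by
      congr 1
      funext q hq
      have hq0 : q ≠ 0 := fun h => hself 0 (h ▸ hq)
      fin_cases q <;> first | exact absurd rfl hq0 | rfl
    rw [← e1, ← e2] at heq
    norm_num at heq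
  -- node 2 has no parents
  have h2 : ¬ ∃ p, E p 2 := by
    rintro hp
    have e1 := h111 2 hp
    have e2 := h11m 2 hp
    have heq : F 2 (fun p _ => ![(1:ℝ),1,1] p) = F 2 (fun p _ => ![(1:ℝ),1,-1] p) := by
      congr 1
      funext q hq
      have hq2 : q ≠ 2 := fun h => hself 2 (h ▸ hq)
      fin_cases q <;> first | exact absurd rfl hq2 | rfl
    rw [← e1, ← e2] at heq
    norm_num [Matrix.cons_val_two, Matrix.tail_cons, Matrix.head_cons] at heq
  by_cases h1 : ∃ p, E p 1
  · -- node 1 has a parent: choose root values 0 and 1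
    set c : ℝ := F 1 (fun q _ => ![(0:ℝ),0,1] q) with hc
    have hw := (hiff ![0, c, 1]).mp ?_
    · simp at hw
      obtain ⟨hA, hB⟩ := hw
      rw [← hA] at hB
      norm_num at hB
    · intro u hu
      have hu0 : u ≠ 0 := fun h => h0 (h ▸ hu)
      have hu2 : u ≠ 2 := fun h => h2 (h ▸ hu)
      have hu1 : u = 1 := by omega
      subst hu1
      show ![(0:ℝ), c, 1] 1 = _
      have hfun : (fun (q : Fin 3) (_ : E q 1) => ![(0:ℝ), c, 1] q)
           = (fun (q : Fin 3) (_ : E q 1) => ![(0:ℝ), 0, 1] q) := by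
        funext q hq
        have hq1 : q ≠ 1 := fun h => hself 1 (h ▸ hq)
        fin_cases q <;> first | exact absurd rfl hq1 | rfl
      rw [hfun]
      simp [hc]
  · -- no node has any parent: every assignment satisfies LHS, contradiction with ![1,0,0]
    have hw := (hiff ![1, 0, 0]).mp ?_
    · norm_num at hw
    · intro u hu
      have hu0 : u ≠ 0 := fun h => h0 (h ▸ hu)
      have hu1 : u ≠ 1 := fun h => h1 (h ▸ hu)
      have hu2 : u ≠ 2 := fun h => h2 (h ▸ hu)
      omega
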